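/- Let G = (V,E) be a finite graph with no isolated vertices, let 0 < δ < |V|^{−2}, and suppose G has an independent set of size K. Construct the repeated matching instance I(G) with T = |V| rounds and n = (2|V|+1)|E| + 1 agents and items as follows. The agents are 'edge agents' (e,i) for each e ∈ E and i ∈ {1,...,2|V|+1}, plus one 'special agent' s. The items are one 'node item' g_u for each u ∈ V, plus n − |V| 'dummy items'. Valuations: for every edge e = (x,y), every i, every u ∈ V, and every t ∈ {1,...,T}, v_{(e,i)}(g_u,t) = δ if u ∈ {x,y} and 0 otherwise; v_s(g_u,t) = 1 for every u ∈ V and t; all agents value every copy of every dummy item at 0. Then there exists an EF1 repeated matching of I(G) with social welfare at least K. -/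

import Mathlib

open Finset

/-- The number of rounds in which agent `i` is matched to item `g`
under the repeated matching `A` (a sequence of `T` bijections from agents to items). -/
def mult {α β : Type*} [DecidableEq β] {T : ℕ} (A : Fin T → α ≃ β) (i : α) (g : β) : ℕ :=
  (Finset.univ.filter fun t : Fin T => A t i = g).card

/-- The value of a bundle with multiplicities `B` under the valuation `v`,
where `v g t` is the value of the `t`-th copy of item `g`. -/
def bundleValue {β : Type*} [Fintype β] (v : β → ℕ → ℝ) (B : β → ℕ) : ℝ :=
  ∑ g : β, ∑ t ∈ Finset.range (B g), v g (t + 1)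

/-- The social welfare of a repeated matching. -/
def SW {α β : Type*} [Fintype α] [Fintype β] [DecidableEq β] {T : ℕ}
    (v : α → β → ℕ → ℝ) (A : Fin T → α ≃ β) : ℝ :=
  ∑ i : α, bundleValue (v i) (mult A i)

/-- Remove one copy of `g` from the bundle `B` (if present; otherwise leave `B` intact). -/
def removeOne {β : Type*} [DecidableEq β] (B : β → ℕ) (g : β) : β → ℕ :=
  fun g' => if g' = g then B g' - 1 else B g'

/-- `EF1`: every agent `i` values her bundle at least as much as any other agent `j`'s
bundle after removing one copy of some item. -/
def EF1 {α β : Type*} [Fintype β] [DecidableEq β] {T : ℕ}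
    (v : α → β → ℕ → ℝ) (A : Fin T → α ≃ β) : Prop :=
  ∀ i j : α, ∃ g : β,
    bundleValue (v i) (mult A i) ≥ bundleValue (v i) (removeOne (mult A j) g)

/-- The valuation in the instance `I(G)` constructed from a graph `G`:
agents are pairs (edge, copy-index in `Fin (2|V|+1)`) plus a special agent
(`Sum.inr ()`), items are node items (`Sum.inl u` for `u : V`) plus `N` dummy
items.  An edge agent values every copy of a node item of an endpoint of its edge
at `δ`, the special agent values every copy of every node item at `1`, and all
other values are `0`. -/
def graphVal {V : Type*} [Fintype V] [DecidableEq V] (G : SimpleGraph V)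
    [DecidableRel G.Adj] (δ : ℝ) (N : ℕ) :
    ((G.edgeFinset × Fin (2 * Fintype.card V + 1)) ⊕ Unit) → (V ⊕ Fin N) → ℕ → ℝ
  | Sum.inl ei, Sum.inl u, _ => if u ∈ (ei.1 : Sym2 V) then δ else 0
  | Sum.inr _, Sum.inl _, _ => 1
  | _, Sum.inr _, _ => 0

/-! In round `t` the special agent receives the node item of the `t`-th vertex if that vertex
lies in the independent set `s`, and a dummy otherwise; all other node-item copies, `|V|²` at most,
go to pairwise distinct edge agents, which is possible because `|V| ≤ 2|E|` (no isolated vertices)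
gives `|V|² ≤ (2|V|+1)|E|`. So every edge agent holds at most one valued copy in total, and an edge
agent values at most one item in the special agent's bundle, since no edge has both endpoints
in `s`. Removing that copy leaves a bundle of value zero, and values are nonnegative, so the
matching is EF1; the special agent alone has value `|s| = K`. -/

open Function

lemma removeOne_le {β : Type*} [DecidableEq β] (B : β → ℕ) (g : β) : removeOne B g ≤ B :=
  fun g' => by
    simp only [removeOne]
    split_ifs <;> omega

section RepeatedMatching

variable {α β : Type*} [Fintype β]

lemma bundleValue_nonneg {v : β → ℕ → ℝ} (hv : ∀ g t, 0 ≤ v g t) (B : β → ℕ) :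
    0 ≤ bundleValue v B :=
  sum_nonneg fun g _ => sum_nonneg fun t _ => hv g (t + 1)

lemma bundleValue_mono {v : β → ℕ → ℝ} (hv : ∀ g t, 0 ≤ v g t) {B B' : β → ℕ} (h : B ≤ B') :
    bundleValue v B ≤ bundleValue v B' :=
  sum_le_sum fun g _ =>
    sum_le_sum_of_subset_of_nonneg (range_subset_range.2 (h g)) fun t _ _ => hv g (t + 1)

variable [DecidableEq β]

lemma exists_bundleValue_removeOne_eq_zero [Nonempty β] {v : β → ℕ → ℝ} {B : β → ℕ}
    (P : Finset β) (hv : ∀ g ∉ P, ∀ t, v g t = 0) (hB : ∑ g ∈ P, B g ≤ 1) :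
    ∃ g, bundleValue v (removeOne B g) = 0 := by
  suffices ∃ g, ∀ g' ∈ P, removeOne B g g' = 0 by
    obtain ⟨g, hg⟩ := this
    refine ⟨g, sum_eq_zero fun g' _ => ?_⟩
    by_cases hg' : g' ∈ P
    · simp [hg g' hg']
    · exact sum_eq_zero fun t _ => hv g' hg' _
  by_cases h : ∃ g ∈ P, B g ≠ 0
  · obtain ⟨g, hgP, hg⟩ := h
    refine ⟨g, fun g' hg'P => ?_⟩
    by_cases hgg : g' = g
    · subst hgg
      have := single_le_sum (fun _ _ => Nat.zero_le _) hgP (f := B)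
      simp only [removeOne, if_true]
      omega
    · have := sum_le_sum_of_subset (f := B) (insert_subset hg'P (singleton_subset_iff.2 hgP))
      rw [sum_pair hgg] at this
      simp only [removeOne, if_neg hgg]
      omega
  · push Not at h
    exact ⟨Classical.arbitrary β, fun g' hg' =>
      Nat.le_zero.1 ((removeOne_le B _ g').trans (h g' hg').le)⟩

lemma EF1_of_forall_ne [Nonempty β] {T : ℕ} {v : α → β → ℕ → ℝ} (hv : ∀ i g t, 0 ≤ v i g t)
    (A : Fin T → α ≃ β)
    (h : ∀ i j, i ≠ j → ∃ g, bundleValue (v i) (removeOne (mult A j) g) = 0) : EF1 v A := by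
  intro i j
  by_cases hij : i = j
  · subst hij
    exact ⟨Classical.arbitrary β, bundleValue_mono (hv i) (removeOne_le _ _)⟩
  · obtain ⟨g, hg⟩ := h i j hij
    exact ⟨g, hg ▸ bundleValue_nonneg (hv i) _⟩

lemma bundleValue_le_SW [Fintype α] {T : ℕ} {v : α → β → ℕ → ℝ} (hv : ∀ i g t, 0 ≤ v i g t)
    (A : Fin T → α ≃ β) (i : α) : bundleValue (v i) (mult A i) ≤ SW v A :=
  single_le_sum (f := fun i => bundleValue (v i) (mult A i))
    (fun j _ => bundleValue_nonneg (hv j) _) (mem_univ i)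

end RepeatedMatching

section Schedule

variable {α V D : Type*}

lemma exists_equiv_sum_inl_iff_of_injective [Fintype α] [DecidableEq α] [Fintype V] [Fintype D]
    {f : V → α} (hf : Injective f) (h : Fintype.card α = Fintype.card V + Fintype.card D) :
    ∃ e : α ≃ V ⊕ D, ∀ i u, e i = Sum.inl u ↔ f u = i := by
  have hD : Fintype.card D = Fintype.card {i // i ∉ Set.range f} := by
    rw [Fintype.card_subtype_compl, Set.card_range_of_injective hf]
    omega
  let e := ((Equiv.ofInjective f hf).sumCongr (Fintype.equivOfCardEq hD)).trans
    (Equiv.sumCompl (· ∈ Set.range f))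
  refine ⟨e.symm, fun i u => ?_⟩
  rw [Equiv.symm_apply_eq, eq_comm]
  rfl

lemma mult_inl_eq_card [DecidableEq α] [DecidableEq V] [DecidableEq D] {T : ℕ}
    {A : Fin T → α ≃ V ⊕ D} {φ : Fin T → V → α} (hA : ∀ t i u, A t i = Sum.inl u ↔ φ t u = i)
    (i : α) (u : V) :
    mult A i (Sum.inl u) = #{t | φ t u = i} := by
  simp only [mult, hA]

variable [DecidableEq V] {T : ℕ}

def schedule (s : Finset V) (τ : V → Fin T) (ψ : Fin T × V → α) (t : Fin T) (u : V) :
    α ⊕ Unit :=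
  if u ∈ s ∧ τ u = t then Sum.inr () else Sum.inl (ψ (t, u))

variable {s : Finset V} {τ : V → Fin T} {ψ : Fin T × V → α}

lemma schedule_injective (hτ : Set.InjOn τ s) (hψ : Injective ψ) (t : Fin T) :
    Injective (schedule s τ ψ t) := by
  intro u u' h
  unfold schedule at h
  split_ifs at h with hu hu'
  · exact hτ hu.1 hu'.1 (hu.2.trans hu'.2.symm)
  · exact (Prod.ext_iff.1 (hψ (Sum.inl_injective h))).2

variable [DecidableEq α]

lemma card_schedule_eq_inr (u : V) :
    #{t | schedule s τ ψ t u = Sum.inr ()} = if u ∈ s then 1 else 0 := by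
  split_ifs with hu <;> simp [schedule, hu, eq_comm, filter_eq']

lemma sum_card_schedule_eq_inl_le_one [Fintype V] (hψ : Injective ψ) (a : α) :
    ∑ u, #{t | schedule s τ ψ t u = Sum.inl a} ≤ 1 := by
  calc ∑ u, #{t | schedule s τ ψ t u = Sum.inl a} ≤ ∑ u, #{t | ψ (t, u) = a} := by
        refine sum_le_sum fun u _ => card_le_card fun t ht => ?_
        rw [mem_filter] at ht ⊢
        simp only [schedule] at ht
        split_ifs at ht <;> simp_all
    _ = #{p : Fin T × V | ψ p = a} := by
        simp only [card_filter]
        exact (Fintype.sum_prod_type_right fun p => if ψ p = a then 1 else 0).symm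
    _ ≤ 1 := card_le_one.2 fun p hp q hq =>
        hψ ((mem_filter.1 hp).2.trans (mem_filter.1 hq).2.symm)

end Schedule

namespace SimpleGraph

variable {V : Type*} (G : SimpleGraph V)

lemma card_le_two_mul_card_edgeFinset [Fintype V] [DecidableRel G.Adj]
    (h : ∀ x, ∃ y, G.Adj x y) : Fintype.card V ≤ 2 * #G.edgeFinset := by
  rw [← G.sum_degrees_eq_twice_card_edges]
  calc Fintype.card V = ∑ _x : V, 1 := by simp
    _ ≤ ∑ x, G.degree x := sum_le_sum fun x _ => (G.degree_pos_iff_exists_adj x).2 (h x)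

lemma card_filter_mem_edge_le_one [DecidableEq V] {s : Finset V}
    (hs : ∀ x ∈ s, ∀ y ∈ s, ¬ G.Adj x y) {e : Sym2 V} (he : e ∈ G.edgeSet) :
    #{u ∈ s | u ∈ e} ≤ 1 := by
  refine card_le_one.2 fun x hx y hy => by_contra fun hxy => ?_
  simp only [mem_filter] at hx hy
  rw [(Sym2.mem_and_mem_iff hxy).1 ⟨hx.2, hy.2⟩, mem_edgeSet] at he
  exact hs x hx.1 y hy.1 he

end SimpleGraph

section GraphInstance

variable {V : Type*} [Fintype V] [DecidableEq V] {G : SimpleGraph V} [DecidableRel G.Adj]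
  {δ : ℝ} {N : ℕ}

lemma graphVal_inr (i : (G.edgeFinset × Fin (2 * Fintype.card V + 1)) ⊕ Unit) (d : Fin N)
    (t : ℕ) : graphVal G δ N i (.inr d) t = 0 := by
  cases i <;> rfl

lemma graphVal_nonneg (hδ : 0 ≤ δ) : ∀ i g t, 0 ≤ graphVal G δ N i g t
  | .inl _, .inl _, _ => ite_nonneg hδ le_rfl
  | .inr _, .inl _, _ => zero_le_one
  | i, .inr d, t => (graphVal_inr i d t).ge

lemma exists_graphVal_removeOne_eq_zero_of_sum_le_one [Nonempty (V ⊕ Fin N)]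
    (i : (G.edgeFinset × Fin (2 * Fintype.card V + 1)) ⊕ Unit) {B : V ⊕ Fin N → ℕ}
    (hB : ∑ u, B (.inl u) ≤ 1) : ∃ g, bundleValue (graphVal G δ N i) (removeOne B g) = 0 := by
  refine exists_bundleValue_removeOne_eq_zero (univ.map .inl) ?_ (by rwa [sum_map])
  rintro (u | d) hg t
  · simp at hg
  · exact graphVal_inr i d t

lemma exists_graphVal_inl_removeOne_eq_zero_of_indep [Nonempty (V ⊕ Fin N)] {s : Finset V}
    (hs : ∀ x ∈ s, ∀ y ∈ s, ¬ G.Adj x y) (p : G.edgeFinset × Fin (2 * Fintype.card V + 1))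
    {B : V ⊕ Fin N → ℕ} (hB : ∀ u, B (.inl u) = if u ∈ s then 1 else 0) :
    ∃ g, bundleValue (graphVal G δ N (.inl p)) (removeOne B g) = 0 := by
  refine exists_bundleValue_removeOne_eq_zero
    (({u | u ∈ (p.1 : Sym2 V)} : Finset V).map .inl) ?_ ?_
  · rintro (u | d) hg t
    · simp only [mem_map, mem_filter, mem_univ, true_and] at hg
      exact if_neg fun hu => hg ⟨u, hu, rfl⟩
    · exact graphVal_inr _ d t
  · rw [sum_map]
    simp only [Embedding.inl_apply, hB, sum_boole, filter_filter, Nat.cast_id]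
    convert G.card_filter_mem_edge_le_one hs (G.mem_edgeFinset.1 p.1.2) using 2
    ext u
    simp [and_comm]

lemma bundleValue_graphVal_inr (B : V ⊕ Fin N → ℕ) :
    bundleValue (graphVal G δ N (.inr ())) B = ∑ u, (B (.inl u) : ℝ) := by
  simp [bundleValue, Fintype.sum_sum_type, graphVal]

end GraphInstance

theorem stmt9_general {V : Type*} [Fintype V] [DecidableEq V] (G : SimpleGraph V)
    [DecidableRel G.Adj]
    (hiso : ∀ x : V, ∃ y : V, G.Adj x y)
    (δ : ℝ) (hδ0 : 0 < δ)
    (N : ℕ) (hN : N = (2 * Fintype.card V + 1) * G.edgeFinset.card + 1 - Fintype.card V)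
    (K : ℕ)
    (hKex : ∃ s : Finset V, s.card = K ∧ ∀ x ∈ s, ∀ y ∈ s, ¬ G.Adj x y) :
    ∃ A : Fin (Fintype.card V) →
        ((G.edgeFinset × Fin (2 * Fintype.card V + 1)) ⊕ Unit) ≃ (V ⊕ Fin N),
      EF1 (graphVal G δ N) A ∧ (K : ℝ) ≤ SW (graphVal G δ N) A := by
  classical
  obtain ⟨s, rfl, hs⟩ := hKex
  have hV := G.card_le_two_mul_card_edgeFinset hiso
  have hV2 : Fintype.card V * Fintype.card V ≤ #G.edgeFinset * (2 * Fintype.card V + 1) := by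
    nlinarith
  obtain ⟨ψ⟩ : Nonempty (Fin (Fintype.card V) × V ↪ G.edgeFinset × Fin (2 * Fintype.card V + 1)) :=
    Embedding.nonempty_of_card_le (by
      rwa [Fintype.card_prod, Fintype.card_prod, Fintype.card_fin, Fintype.card_coe,
        Fintype.card_fin])
  have hcard : Fintype.card ((G.edgeFinset × Fin (2 * Fintype.card V + 1)) ⊕ Unit)
      = Fintype.card V + Fintype.card (Fin N) := by
    have : Fintype.card V ≤ #G.edgeFinset * (2 * Fintype.card V + 1) + 1 := by nlinarith
    simp only [Fintype.card_sum, Fintype.card_prod, Fintype.card_coe, Fintype.card_fin,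
      Fintype.card_unit, hN, Nat.mul_comm (2 * Fintype.card V + 1)]
    omega
  have : Nonempty (V ⊕ Fin N) := Fintype.card_pos_iff.1 (by
    rw [Fintype.card_sum, ← hcard]
    exact Fintype.card_pos)
  let τ := Fintype.equivFin V
  choose A hA using fun t => exists_equiv_sum_inl_iff_of_injective
    (schedule_injective (s := s) τ.injective.injOn ψ.injective t) hcard
  have hmult := mult_inl_eq_card hA
  refine ⟨A, EF1_of_forall_ne (graphVal_nonneg hδ0.le) A ?_, ?_⟩
  · rintro i (a | ⟨⟨⟩⟩) hij
    · refine exists_graphVal_removeOne_eq_zero_of_sum_le_one i ?_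
      simpa only [hmult] using sum_card_schedule_eq_inl_le_one ψ.injective a
    · obtain p | ⟨⟩ := i
      · exact exists_graphVal_inl_removeOne_eq_zero_of_indep hs p fun u => by
          rw [hmult, card_schedule_eq_inr]
      · exact absurd rfl hij
  · calc ((#s : ℕ) : ℝ) = bundleValue (graphVal G δ N (.inr ())) (mult A (.inr ())) := by
          simp [bundleValue_graphVal_inr, hmult, card_schedule_eq_inr]
      _ ≤ SW _ A := bundleValue_le_SW (graphVal_nonneg hδ0.le) A _

/-- If a graph `G` with no isolated vertices has an independent set of size `K`,
then the instance `I(G)` (with `T = |V|` rounds and `n = (2|V|+1)|E| + 1`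
agents/items) admits an EF1 repeated matching of social welfare at least `K`. -/
theorem stmt9 {V : Type*} [Fintype V] [DecidableEq V] (G : SimpleGraph V)
    [DecidableRel G.Adj]
    (hiso : ∀ x : V, ∃ y : V, G.Adj x y)
    (δ : ℝ) (hδ0 : 0 < δ) (hδ1 : δ < 1 / (Fintype.card V : ℝ) ^ 2)
    (N : ℕ) (hN : N = (2 * Fintype.card V + 1) * G.edgeFinset.card + 1 - Fintype.card V)
    (K : ℕ)
    (hKex : ∃ s : Finset V, s.card = K ∧ ∀ x ∈ s, ∀ y ∈ s, ¬ G.Adj x y) :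
    ∃ A : Fin (Fintype.card V) →
        ((G.edgeFinset × Fin (2 * Fintype.card V + 1)) ⊕ Unit) ≃ (V ⊕ Fin N),
      EF1 (graphVal G δ N) A ∧ (K : ℝ) ≤ SW (graphVal G δ N) A :=
  stmt9_general G hiso δ hδ0 N hN K hKex
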